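/- If G has maximum SLEE among all connected graphs on n vertices with r cut vertices (1 ≤ r ≤ n − 3), then every cut vertex of G lies in exactly two blocks of G. -/

import Mathlib

open scoped Classical

variable {V : Type*}

/-- The signless Laplacian matrix `Q = D + A` of a graph. -/
noncomputable def sLap (G : SimpleGraph V) [Fintype V] : Matrix V V ℝ :=
  Matrix.diagonal (fun v => (G.degree v : ℝ)) + G.adjMatrix ℝ

theorem sLap_isHermitian (G : SimpleGraph V) [Fintype V] : (sLap G).IsHermitian := by
  unfold sLap
  rw [Matrix.IsHermitian, Matrix.conjTranspose_eq_transpose_of_trivial, Matrix.transpose_add,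
    Matrix.diagonal_transpose, SimpleGraph.transpose_adjMatrix]

/-- The Laplacian matrix `L = D - A` of a graph. -/
noncomputable def lap (G : SimpleGraph V) [Fintype V] : Matrix V V ℝ :=
  Matrix.diagonal (fun v => (G.degree v : ℝ)) - G.adjMatrix ℝ

theorem lap_isHermitian (G : SimpleGraph V) [Fintype V] : (lap G).IsHermitian := by
  unfold lap
  rw [Matrix.IsHermitian, Matrix.conjTranspose_eq_transpose_of_trivial, Matrix.transpose_sub,
    Matrix.diagonal_transpose, SimpleGraph.transpose_adjMatrix]

/-- The signless Laplacian Estrada index: the sum of `exp qᵢ` over the eigenvalues of `Q`. -/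
noncomputable def SLEE (G : SimpleGraph V) [Fintype V] : ℝ :=
  ∑ i, Real.exp ((sLap_isHermitian G).eigenvalues i)

/-- The Laplacian Estrada index: the sum of `exp μᵢ` over the eigenvalues of `L`. -/
noncomputable def LEE (G : SimpleGraph V) [Fintype V] : ℝ :=
  ∑ i, Real.exp ((lap_isHermitian G).eigenvalues i)

/-- Semi-edge walks of length `k` from `x` to `y`: a sequence of `k+1` vertices and `k`
edges of `G` such that consecutive vertices are (not necessarily distinct) endpoints of
the intervening edge. -/
def semiEdgeWalks (G : SimpleGraph V) (k : ℕ) (x y : V) :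
    Set ((Fin (k + 1) → V) × (Fin k → Sym2 V)) :=
  {w | w.1 0 = x ∧ w.1 (Fin.last k) = y ∧
    ∀ i : Fin k, w.2 i ∈ G.edgeSet ∧ w.1 i.castSucc ∈ w.2 i ∧ w.1 i.succ ∈ w.2 i}

/-- Closed semi-edge walks of length `k` in `G`. -/
def closedSemiEdgeWalks (G : SimpleGraph V) (k : ℕ) :
    Set ((Fin (k + 1) → V) × (Fin k → Sym2 V)) :=
  {w | w.1 0 = w.1 (Fin.last k) ∧
    ∀ i : Fin k, w.2 i ∈ G.edgeSet ∧ w.1 i.castSucc ∈ w.2 i ∧ w.1 i.succ ∈ w.2 i}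

/-- The number of connected components of a graph. -/
noncomputable def numComponents (G : SimpleGraph V) : ℕ := Nat.card G.ConnectedComponent

/-- A cut vertex: a vertex whose removal increases the number of connected components. -/
def IsCutVertex (G : SimpleGraph V) (v : V) : Prop :=
  numComponents G < numComponents (G.induce ({v}ᶜ : Set V))

/-- The number of cut vertices of a graph. -/
noncomputable def cutVertexCount (G : SimpleGraph V) [Fintype V] : ℕ :=
  (Finset.univ.filter (fun v => IsCutVertex G v)).card

/-- The graph obtained from `G` by adding the edge `uv`. -/
def addEdge (G : SimpleGraph V) (u v : V) : SimpleGraph V :=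
  G ⊔ SimpleGraph.fromEdgeSet {s(u, v)}

/-- A block of `G`: a maximal vertex set inducing a connected subgraph with no cut vertex. -/
def IsBlock (G : SimpleGraph V) (B : Set V) : Prop :=
  (G.induce B).Connected ∧ (∀ v : B, ¬ IsCutVertex (G.induce B) v) ∧
  ∀ C : Set V, B ⊆ C → (G.induce C).Connected → (∀ v : C, ¬ IsCutVertex (G.induce C) v) →
    B = C

/-!
Joining two non-adjacent vertices strictly increases SLEE: it is the sum `∑ tr (Qᵏ) / k!` of the
exponential series of the signless Laplacian `Q`, the entries of `Qᵏ` grow with the graph, and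
`tr Q = 2 |E|`. Now let `v` be a cut vertex of an SLEE-maximal graph `G`. Two components of
`G - v` give two blocks through `v`. If `v` lay in three blocks, pick neighbours `u₁, u₂, u₃` of
`v` in them; they are pairwise distinct and non-adjacent. Joining `uᵢ` to `uⱼ` changes no cut
vertex as long as `v` remains one, so by maximality each of the three joins reconnects `G - v`.
No three such edges can exist in a disconnected graph.
-/

open Finset SimpleGraph

namespace SimpleGraph

variable {W : Type*} {K : SimpleGraph W} {u w a b c : W}

lemma Reachable.sup_edge_cases (h : (K ⊔ edge u w).Reachable a b) :
    K.Reachable a b ∨ (K.Reachable a u ∧ K.Reachable w b) ∨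
      (K.Reachable a w ∧ K.Reachable u b) := by
  obtain ⟨p⟩ := h
  induction p with
  | nil => exact Or.inl .rfl
  | @cons a c b hadj p ih =>
    rcases hadj with hK | hE
    · have hac : K.Reachable a c := hK.reachable
      rcases ih with h | ⟨h₁, h₂⟩ | ⟨h₁, h₂⟩
      · exact Or.inl (hac.trans h)
      · exact Or.inr (Or.inl ⟨hac.trans h₁, h₂⟩)
      · exact Or.inr (Or.inr ⟨hac.trans h₁, h₂⟩)
    · obtain ⟨⟨rfl, rfl⟩ | ⟨rfl, rfl⟩, -⟩ := (edge_adj ..).1 hE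
      · rcases ih with h | ⟨h₁, h₂⟩ | ⟨-, h₂⟩
        · exact Or.inr (Or.inl ⟨.rfl, h⟩)
        · exact Or.inl (h₁.symm.trans h₂)
        · exact Or.inl h₂
      · rcases ih with h | ⟨-, h₂⟩ | ⟨h₁, h₂⟩
        · exact Or.inr (Or.inr ⟨.rfl, h⟩)
        · exact Or.inl h₂
        · exact Or.inl (h₁.symm.trans h₂)

lemma reachable_sup_edge_iff_of_reachable (huw : K.Reachable u w) :
    (K ⊔ edge u w).Reachable a b ↔ K.Reachable a b := by
  refine ⟨fun h => ?_, fun h => h.mono le_sup_left⟩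
  rcases h.sup_edge_cases with h | ⟨h₁, h₂⟩ | ⟨h₁, h₂⟩
  · exact h
  · exact (h₁.trans huw).trans h₂
  · exact (h₁.trans huw.symm).trans h₂

lemma preconnected_sup_edge_iff_of_reachable (huw : K.Reachable u w) :
    (K ⊔ edge u w).Preconnected ↔ K.Preconnected :=
  forall₂_congr fun _ _ => reachable_sup_edge_iff_of_reachable huw

/-- If no two of `a, b, c` are joined in `K`, then `c` is still cut off from `a` in
`K ⊔ edge a b`. -/
lemma Preconnected.of_sup_edge_of_sup_edge_of_sup_edge (hab : (K ⊔ edge a b).Preconnected)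
    (hac : (K ⊔ edge a c).Preconnected) (hbc : (K ⊔ edge b c).Preconnected) :
    K.Preconnected := by
  by_cases rab : K.Reachable a b
  · exact (preconnected_sup_edge_iff_of_reachable rab).1 hab
  by_cases rac : K.Reachable a c
  · exact (preconnected_sup_edge_iff_of_reachable rac).1 hac
  by_cases rbc : K.Reachable b c
  · exact (preconnected_sup_edge_iff_of_reachable rbc).1 hbc
  rcases (hab c a).sup_edge_cases with h | ⟨h, -⟩ | ⟨h, -⟩
  · exact absurd h.symm rac
  · exact absurd h.symm rac
  · exact absurd h.symm rbc

lemma induce_sup_edge_of_mem {G : SimpleGraph W} {S : Set W} (hu : u ∈ S) (hw : w ∈ S) :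
    (G ⊔ edge u w).induce S = G.induce S ⊔ edge ⟨u, hu⟩ ⟨w, hw⟩ := by
  ext a b
  simp [edge_adj, Subtype.ext_iff]

lemma induce_sup_edge_of_notMem {G : SimpleGraph W} {S : Set W} (hu : u ∉ S) :
    (G ⊔ edge u w).induce S = G.induce S := by
  ext a b
  simp only [comap_adj, Function.Embedding.coe_subtype, sup_adj, edge_adj, or_iff_left_iff_imp]
  rintro ⟨⟨rfl, -⟩ | ⟨-, rfl⟩, -⟩
  · exact absurd a.2 hu
  · exact absurd b.2 hu

lemma degree_le_degree_of_le [Fintype V] {G H : SimpleGraph V} (h : G ≤ H) (v : V) :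
    G.degree v ≤ H.degree v :=
  card_le_card fun u => by simpa using @h v u

lemma Connected.exists_adj_reachable_induce_compl {G : SimpleGraph V} (hG : G.Connected)
    {v a : V} (hav : a ≠ v) :
    ∃ u, ∃ h : G.Adj v u, (G.induce ({v}ᶜ : Set V)).Reachable ⟨a, hav⟩ ⟨u, h.ne'⟩ := by
  obtain ⟨p⟩ := hG.preconnected a v
  induction p with
  | nil => exact absurd rfl hav
  | @cons a c v hac p ih =>
    by_cases hcv : c = v
    · subst hcv
      exact ⟨a, hac.symm, .rfl⟩
    · obtain ⟨u, h, hr⟩ := ih hcv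
      have hac' : (G.induce ({v}ᶜ : Set V)).Adj ⟨a, hav⟩ ⟨c, hcv⟩ := hac
      exact ⟨u, h, hac'.reachable.trans hr⟩

end SimpleGraph

namespace Matrix

variable {n : Type*} [Fintype n]

lemma IsHermitian.trace_pow_eq_sum_eigenvalues_pow {𝕜 : Type*} [RCLike 𝕜] [DecidableEq n]
    {A : Matrix n n 𝕜} (hA : A.IsHermitian) (k : ℕ) :
    (A ^ k).trace = ∑ i, (hA.eigenvalues i : 𝕜) ^ k := by
  conv_lhs => rw [hA.spectral_theorem, ← map_pow, Unitary.conjStarAlgAut_apply, trace_mul_cycle,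
    Unitary.coe_star_mul_self, one_mul, diagonal_pow, trace_diagonal]
  simp

lemma IsHermitian.hasSum_trace_pow_div_factorial [DecidableEq n] {A : Matrix n n ℝ}
    (hA : A.IsHermitian) :
    HasSum (fun k => (A ^ k).trace / k.factorial) (∑ i, Real.exp (hA.eigenvalues i)) := by
  simp_rw [hA.trace_pow_eq_sum_eigenvalues_pow, RCLike.ofReal_real_eq_id, id, sum_div]
  exact hasSum_sum fun i _ => by
    simpa [Real.exp_eq_exp_ℝ] using NormedSpace.expSeries_div_hasSum_exp (hA.eigenvalues i)

lemma pow_apply_le_pow_apply {α : Type*} [Semiring α] [PartialOrder α] [IsOrderedRing α]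
    [DecidableEq n] {A B : Matrix n n α} (hA : ∀ i j, 0 ≤ A i j) (hAB : ∀ i j, A i j ≤ B i j)
    (k : ℕ) (i j : n) : (A ^ k) i j ≤ (B ^ k) i j := by
  induction k generalizing j with
  | zero => rfl
  | succ k ih =>
    rw [pow_succ, pow_succ, mul_apply, mul_apply]
    refine sum_le_sum fun l _ => mul_le_mul (ih l) (hAB l j) (hA l j) ?_
    exact pow_apply_nonneg (fun i j => (hA i j).trans (hAB i j)) k i l

lemma IsHermitian.sum_exp_eigenvalues_lt [DecidableEq n] {A B : Matrix n n ℝ} (hA : A.IsHermitian)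
    (hB : B.IsHermitian) (hA₀ : ∀ i j, 0 ≤ A i j) (hAB : ∀ i j, A i j ≤ B i j)
    (htr : A.trace < B.trace) :
    ∑ i, Real.exp (hA.eigenvalues i) < ∑ i, Real.exp (hB.eigenvalues i) := by
  have hle : ∀ k, (A ^ k).trace / k.factorial ≤ (B ^ k).trace / k.factorial := fun k =>
    div_le_div_of_nonneg_right (sum_le_sum fun i _ => pow_apply_le_pow_apply hA₀ hAB k i i)
      (Nat.cast_nonneg _)
  exact hasSum_lt hle (i := 1) (by simpa using htr) hA.hasSum_trace_pow_div_factorial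
    hB.hasSum_trace_pow_div_factorial

end Matrix

section SignlessLaplacian

variable [Fintype V] {G H : SimpleGraph V}

lemma sLap_apply (G : SimpleGraph V) (i j : V) :
    sLap G i j = (if i = j then (G.degree i : ℝ) else 0) + if G.Adj i j then 1 else 0 := by
  simp [sLap, Matrix.diagonal_apply]

lemma sLap_apply_nonneg (G : SimpleGraph V) (i j : V) : 0 ≤ sLap G i j := by
  rw [sLap_apply]
  positivity

lemma sLap_apply_le_of_le (h : G ≤ H) (i j : V) : sLap G i j ≤ sLap H i j := by
  rw [sLap_apply, sLap_apply]
  gcongr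
  · split_ifs <;> simp [degree_le_degree_of_le h]
  · split_ifs with hG hH <;> first | exact absurd (h hG) hH | norm_num

lemma trace_sLap (G : SimpleGraph V) : (sLap G).trace = 2 * #G.edgeFinset := by
  simp only [Matrix.trace, Matrix.diag, sLap_apply, ite_true, SimpleGraph.irrefl, if_false,
    add_zero]
  exact_mod_cast G.sum_degrees_eq_twice_card_edges

lemma SLEE_lt_SLEE_of_lt (h : G < H) : SLEE G < SLEE H := by
  refine (sLap_isHermitian G).sum_exp_eigenvalues_lt (sLap_isHermitian H) (sLap_apply_nonneg G)
    (sLap_apply_le_of_le h.le) ?_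
  rw [trace_sLap, trace_sLap]
  exact_mod_cast Nat.mul_lt_mul_of_pos_left (card_lt_card (edgeFinset_strict_mono h)) two_pos

end SignlessLaplacian

section CutVertex

variable {W : Type*} [Finite W] {K : SimpleGraph W}

lemma numComponents_le_one_iff : numComponents K ≤ 1 ↔ K.Preconnected := by
  rw [numComponents, Finite.card_le_one_iff_subsingleton]
  exact ⟨fun _ u w => ConnectedComponent.exact (Subsingleton.elim _ _),
    Preconnected.subsingleton_connectedComponent⟩

lemma SimpleGraph.Connected.isCutVertex_iff (hK : K.Connected) (v : W) :
    IsCutVertex K v ↔ ¬ (K.induce ({v}ᶜ : Set W)).Preconnected := by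
  have : numComponents K = 1 := by
    have := hK.nonempty
    exact le_antisymm (numComponents_le_one_iff.2 hK.preconnected) Nat.card_pos
  rw [IsCutVertex, this, ← numComponents_le_one_iff, not_le]

variable {G : SimpleGraph V} {u v w : V}

/-- The new edge `uw` only joins two vertices that are already joined through `v`, except in
`G - v`, `G - u` and `G - w`; the last two do not contain the new edge at all. -/
lemma isCutVertex_sup_edge_iff [Finite V] (hG : G.Connected) (hu : G.Adj v u) (hw : G.Adj v w)
    (hv : IsCutVertex (G ⊔ edge u w) v) (x : V) :
    IsCutVertex (G ⊔ edge u w) x ↔ IsCutVertex G x := by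
  have hG' : (G ⊔ edge u w).Connected := hG.mono le_sup_left
  rw [hG.isCutVertex_iff, hG'.isCutVertex_iff]
  refine ⟨fun h h' => h (h'.mono fun _ _ hab => Or.inl hab), fun h => ?_⟩
  by_cases hxv : x = v
  · exact hxv ▸ (hG'.isCutVertex_iff v).1 hv
  by_cases hxu : x = u
  · rwa [induce_sup_edge_of_notMem (by simp [hxu])]
  by_cases hxw : x = w
  · rwa [edge_comm, induce_sup_edge_of_notMem (by simp [hxw])]
  have hxv' : v ∈ ({x}ᶜ : Set V) := Ne.symm hxv
  have hxu' : u ∈ ({x}ᶜ : Set V) := Ne.symm hxu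
  have hxw' : w ∈ ({x}ᶜ : Set V) := Ne.symm hxw
  have hvu : (G.induce ({x}ᶜ : Set V)).Adj ⟨v, hxv'⟩ ⟨u, hxu'⟩ := hu
  have hvw : (G.induce ({x}ᶜ : Set V)).Adj ⟨v, hxv'⟩ ⟨w, hxw'⟩ := hw
  rwa [induce_sup_edge_of_mem hxu' hxw',
    preconnected_sup_edge_iff_of_reachable (hvu.reachable.symm.trans hvw.reachable)]

lemma cutVertexCount_sup_edge [Fintype V] (hG : G.Connected) (hu : G.Adj v u) (hw : G.Adj v w)
    (hv : IsCutVertex (G ⊔ edge u w) v) : cutVertexCount (G ⊔ edge u w) = cutVertexCount G := by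
  unfold cutVertexCount
  congr 1
  exact filter_congr fun x _ => isCutVertex_sup_edge_iff hG hu hw hv x

lemma not_isCutVertex_sup_edge_of_forall_SLEE_le [Fintype V] (hG : G.Connected)
    (hmax : ∀ H : SimpleGraph V, H.Connected → cutVertexCount H = cutVertexCount G →
      SLEE H ≤ SLEE G)
    (hu : G.Adj v u) (hw : G.Adj v w) (huw : u ≠ w) (hnadj : ¬ G.Adj u w) :
    ¬ IsCutVertex (G ⊔ edge u w) v := fun hv =>
  (hmax _ (hG.mono le_sup_left) (cutVertexCount_sup_edge hG hu hw hv)).not_gt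
    (SLEE_lt_SLEE_of_lt (G.lt_sup_edge _ _ huw hnadj))

end CutVertex

section Blocks

variable {G : SimpleGraph V}

def IsNonseparable (G : SimpleGraph V) (S : Set V) : Prop :=
  (G.induce S).Connected ∧ ∀ x ∈ S, (G.induce (S \ {x})).Preconnected

def induceComplSingletonIso (G : SimpleGraph V) (S : Set V) (x : S) :
    (G.induce S).induce ({x}ᶜ : Set S) ≃g G.induce (S \ {x.1}) where
  toFun y := ⟨y.1.1, y.1.2, fun h => y.2 (Subtype.ext h)⟩
  invFun z := ⟨⟨z.1, z.2.1⟩, fun h => z.2.2 (congrArg Subtype.val h)⟩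
  left_inv _ := rfl
  right_inv _ := rfl
  map_rel_iff' := Iff.rfl

lemma isBlock_iff_maximal [Finite V] {B : Set V} : IsBlock G B ↔ Maximal (IsNonseparable G) B := by
  have hcut : ∀ {S : Set V}, (G.induce S).Connected →
      ((∀ x : S, ¬ IsCutVertex (G.induce S) x) ↔ ∀ x ∈ S, (G.induce (S \ {x})).Preconnected) :=
    fun hS => by
      simp only [hS.isCutVertex_iff, not_not, (induceComplSingletonIso G _ _).preconnected_iff,
        Subtype.forall]
  simp only [IsBlock, Maximal, IsNonseparable]
  constructor
  · rintro ⟨hB, hBcut, hmax⟩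
    exact ⟨⟨hB, (hcut hB).1 hBcut⟩, fun C ⟨hC, hCcut⟩ hBC =>
      (hmax C hBC hC ((hcut hC).2 hCcut)).ge⟩
  · rintro ⟨⟨hB, hBcut⟩, hmax⟩
    exact ⟨hB, (hcut hB).2 hBcut, fun C hBC hC hCcut =>
      hBC.antisymm (hmax ⟨hC, (hcut hC).1 hCcut⟩ hBC)⟩

lemma IsNonseparable.exists_isBlock [Finite V] {S : Set V} (hS : IsNonseparable G S) :
    ∃ B, IsBlock G B ∧ S ⊆ B := by
  obtain ⟨B, hSB, hB⟩ := Finite.exists_le_maximal hS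
  exact ⟨B, isBlock_iff_maximal.2 hB, hSB⟩

lemma SimpleGraph.IsClique.isNonseparable {S : Set V} (hS : G.IsClique S) (hne : S.Nonempty) :
    IsNonseparable G S := by
  have : Nonempty S := hne.to_subtype
  refine ⟨?_, fun x _ => ?_⟩
  · rw [induce_eq_top.2 hS]
    exact connected_top
  · rw [induce_eq_top.2 (hS.subset Set.sdiff_subset)]
    exact preconnected_top

lemma IsNonseparable.preconnected_diff {S : Set V} (hS : IsNonseparable G S) (x : V) :
    (G.induce (S \ {x})).Preconnected := by
  by_cases hx : x ∈ S
  · exact hS.2 x hx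
  · rw [Set.sdiff_singleton_eq_self hx]
    exact hS.1.preconnected

lemma IsNonseparable.union {S T : Set V} (hS : IsNonseparable G S) (hT : IsNonseparable G T)
    {a b : V} (ha : a ∈ S ∩ T) (hb : b ∈ S ∩ T) (hab : a ≠ b) : IsNonseparable G (S ∪ T) := by
  refine ⟨induce_union_connected hS.1.preconnected hT.1.preconnected ⟨a, ha⟩, fun x _ => ?_⟩
  obtain ⟨c, ⟨hcS, hcT⟩, hcx⟩ : ∃ c ∈ S ∩ T, c ≠ x := by
    by_cases hax : a = x
    · exact ⟨b, hb, hax ▸ hab.symm⟩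
    · exact ⟨a, ha, hax⟩
  rw [Set.union_sdiff_distrib]
  exact (induce_union_connected (hS.preconnected_diff x) (hT.preconnected_diff x)
    ⟨c, ⟨hcS, hcx⟩, hcT, hcx⟩).preconnected

lemma IsBlock.eq_of_mem_of_mem [Finite V] {B₁ B₂ : Set V} (h₁ : IsBlock G B₁) (h₂ : IsBlock G B₂)
    {a b : V} (ha : a ∈ B₁ ∩ B₂) (hb : b ∈ B₁ ∩ B₂) (hab : a ≠ b) : B₁ = B₂ := by
  rw [isBlock_iff_maximal] at h₁ h₂
  have hU := h₁.prop.union h₂.prop ha hb hab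
  exact (h₁.eq_of_subset hU Set.subset_union_left).trans
    (h₂.eq_of_subset hU Set.subset_union_right).symm

end Blocks

section BlocksAtVertex

variable [Finite V] {G : SimpleGraph V} {v : V}

lemma IsBlock.reachable_induce_compl {B : Set V} (hB : IsBlock G B) (hv : v ∈ B) {a b : V}
    (ha : a ∈ B) (hb : b ∈ B) (hav : a ≠ v) (hbv : b ≠ v) :
    (G.induce ({v}ᶜ : Set V)).Reachable ⟨a, hav⟩ ⟨b, hbv⟩ := by
  have hr := (isBlock_iff_maximal.1 hB).prop.2 v hv ⟨a, ha, hav⟩ ⟨b, hb, hbv⟩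
  exact hr.map (G.induceHomOfLE fun _ hx => hx.2).toHom

lemma IsBlock.exists_adj [Nontrivial V] (hG : G.Connected) {B : Set V} (hB : IsBlock G B)
    (hv : v ∈ B) : ∃ u ∈ B, G.Adj v u := by
  by_cases hBv : ∃ u ∈ B, u ≠ v
  · obtain ⟨u, huB, huv⟩ := hBv
    obtain ⟨p⟩ := (isBlock_iff_maximal.1 hB).prop.1.preconnected ⟨v, hv⟩ ⟨u, huB⟩
    have hp : ¬ p.Nil := Walk.not_nil_of_ne fun h => huv (congrArg Subtype.val h).symm
    exact ⟨p.snd.1, p.snd.2, p.adj_snd hp⟩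
  · push Not at hBv
    obtain ⟨y, hyv⟩ := exists_ne v
    obtain ⟨u, hu, -⟩ := hG.exists_adj_reachable_induce_compl hyv
    have hvu : IsNonseparable G {v, u} :=
      (isClique_pair.2 fun _ => hu).isNonseparable (Set.insert_nonempty _ _)
    have hBvu : B = {v, u} := (isBlock_iff_maximal.1 hB).eq_of_subset hvu fun z hz => by
      simp [hBv z hz]
    exact ⟨u, by simp [hBvu], hu⟩

/-- The neighbours of `v` in two different blocks through `v` are distinct and non-adjacent:
a shared vertex, or the triangle through an edge between them, would merge the two blocks. -/
lemma IsBlock.ne_and_not_adj {B₁ B₂ : Set V} (h₁ : IsBlock G B₁) (h₂ : IsBlock G B₂)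
    (h₁₂ : B₁ ≠ B₂) (hv₁ : v ∈ B₁) (hv₂ : v ∈ B₂) {u₁ u₂ : V} (hu₁ : u₁ ∈ B₁) (hu₂ : u₂ ∈ B₂)
    (hvu₁ : G.Adj v u₁) (hvu₂ : G.Adj v u₂) : u₁ ≠ u₂ ∧ ¬ G.Adj u₁ u₂ := by
  refine ⟨fun h => h₁₂ (h₁.eq_of_mem_of_mem h₂ ⟨hv₁, hv₂⟩ ⟨hu₁, h ▸ hu₂⟩ hvu₁.ne), fun hadj => ?_⟩
  have hT : IsNonseparable G {v, u₁, u₂} :=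
    IsClique.isNonseparable (by simp [isClique_insert, hvu₁, hvu₂, hadj,
      hvu₁.ne, hvu₂.ne, hadj.ne]) (Set.insert_nonempty _ _)
  obtain ⟨B, hB, hTB⟩ := hT.exists_isBlock
  have hB₁ := hB.eq_of_mem_of_mem h₁ ⟨hTB (by simp), hv₁⟩ ⟨hTB (by simp), hu₁⟩ hvu₁.ne
  have hB₂ := hB.eq_of_mem_of_mem h₂ ⟨hTB (by simp), hv₂⟩ ⟨hTB (by simp), hu₂⟩ hvu₂.ne
  exact h₁₂ (hB₁.symm.trans hB₂)

lemma SimpleGraph.Connected.exists_isBlock_ne_of_isCutVertex (hG : G.Connected)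
    (hv : IsCutVertex G v) :
    ∃ B₁ B₂, IsBlock G B₁ ∧ v ∈ B₁ ∧ IsBlock G B₂ ∧ v ∈ B₂ ∧ B₁ ≠ B₂ := by
  obtain ⟨a, b, hab⟩ : ∃ a b, ¬ (G.induce ({v}ᶜ : Set V)).Reachable a b := by
    simpa [Preconnected] using (hG.isCutVertex_iff v).1 hv
  obtain ⟨ua, hua, ha⟩ := hG.exists_adj_reachable_induce_compl a.2
  obtain ⟨ub, hub, hb⟩ := hG.exists_adj_reachable_induce_compl b.2
  obtain ⟨B₁, hB₁, h₁⟩ :=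
    ((isClique_pair.2 fun _ => hua).isNonseparable (Set.insert_nonempty _ _)).exists_isBlock
  obtain ⟨B₂, hB₂, h₂⟩ :=
    ((isClique_pair.2 fun _ => hub).isNonseparable (Set.insert_nonempty _ _)).exists_isBlock
  refine ⟨B₁, B₂, hB₁, h₁ (by simp), hB₂, h₂ (by simp), ?_⟩
  rintro rfl
  exact hab (ha.trans ((hB₁.reachable_induce_compl (h₁ (by simp)) (h₁ (by simp)) (h₂ (by simp))
    hua.ne' hub.ne').trans hb.symm))

end BlocksAtVertex

section Maximal

variable [Fintype V] {G : SimpleGraph V} {v : V}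

lemma preconnected_induce_compl_sup_edge_of_forall_SLEE_le (hG : G.Connected)
    (hmax : ∀ H : SimpleGraph V, H.Connected → cutVertexCount H = cutVertexCount G →
      SLEE H ≤ SLEE G)
    {B₁ B₂ : Set V} (h₁ : IsBlock G B₁) (h₂ : IsBlock G B₂) (h₁₂ : B₁ ≠ B₂) (hv₁ : v ∈ B₁)
    (hv₂ : v ∈ B₂) {u₁ u₂ : V} (hu₁ : u₁ ∈ B₁) (hu₂ : u₂ ∈ B₂) (hvu₁ : G.Adj v u₁)
    (hvu₂ : G.Adj v u₂) :
    (G.induce ({v}ᶜ : Set V) ⊔ edge ⟨u₁, hvu₁.ne'⟩ ⟨u₂, hvu₂.ne'⟩).Preconnected := by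
  obtain ⟨hne, hnadj⟩ := h₁.ne_and_not_adj h₂ h₁₂ hv₁ hv₂ hu₁ hu₂ hvu₁ hvu₂
  have h := not_isCutVertex_sup_edge_of_forall_SLEE_le hG hmax hvu₁ hvu₂ hne hnadj
  rwa [(hG.mono le_sup_left).isCutVertex_iff, not_not, induce_sup_edge_of_mem] at h

lemma IsBlock.eq_or_eq_of_forall_SLEE_le (hG : G.Connected)
    (hmax : ∀ H : SimpleGraph V, H.Connected → cutVertexCount H = cutVertexCount G →
      SLEE H ≤ SLEE G)
    (hv : IsCutVertex G v) {B₁ B₂ B₃ : Set V} (h₃ : IsBlock G B₃) (hv₃ : v ∈ B₃)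
    (h₁ : IsBlock G B₁) (h₂ : IsBlock G B₂) (hv₁ : v ∈ B₁) (hv₂ : v ∈ B₂) (h₁₂ : B₁ ≠ B₂) :
    B₃ = B₁ ∨ B₃ = B₂ := by
  have hcut := (hG.isCutVertex_iff v).1 hv
  have : Nontrivial V := not_subsingleton_iff_nontrivial.1 fun _ =>
    hcut fun a b => Subsingleton.elim a b ▸ .rfl
  by_contra! ⟨h₃₁, h₃₂⟩
  obtain ⟨u₁, hu₁, hvu₁⟩ := h₁.exists_adj hG hv₁
  obtain ⟨u₂, hu₂, hvu₂⟩ := h₂.exists_adj hG hv₂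
  obtain ⟨u₃, hu₃, hvu₃⟩ := h₃.exists_adj hG hv₃
  exact hcut <| .of_sup_edge_of_sup_edge_of_sup_edge
    (preconnected_induce_compl_sup_edge_of_forall_SLEE_le hG hmax h₁ h₂ h₁₂ hv₁ hv₂ hu₁ hu₂
      hvu₁ hvu₂)
    (preconnected_induce_compl_sup_edge_of_forall_SLEE_le hG hmax h₁ h₃ h₃₁.symm hv₁ hv₃ hu₁ hu₃
      hvu₁ hvu₃)
    (preconnected_induce_compl_sup_edge_of_forall_SLEE_le hG hmax h₂ h₃ h₃₂.symm hv₂ hv₃ hu₂ hu₃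
      hvu₂ hvu₃)

end Maximal

theorem cut_vertex_in_two_blocks_of_max_SLEE_general [Fintype V] {r : ℕ}
    (G : SimpleGraph V) (hconn : G.Connected) (hG : cutVertexCount G = r)
    (hmax : ∀ H : SimpleGraph V, H.Connected → cutVertexCount H = r → SLEE H ≤ SLEE G) :
    ∀ v : V, IsCutVertex G v →
      Nat.card {B : Set V // IsBlock G B ∧ v ∈ B} = 2 := by
  subst hG
  intro v hv
  obtain ⟨B₁, B₂, hB₁, hv₁, hB₂, hv₂, h₁₂⟩ := hconn.exists_isBlock_ne_of_isCutVertex hv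
  rw [Nat.card_eq_two_iff]
  refine ⟨⟨B₁, hB₁, hv₁⟩, ⟨B₂, hB₂, hv₂⟩, fun h => h₁₂ (congrArg Subtype.val h), ?_⟩
  refine Set.eq_univ_of_forall fun ⟨B₃, hB₃, hv₃⟩ => ?_
  simpa [Subtype.ext_iff] using
    hB₃.eq_or_eq_of_forall_SLEE_le hconn hmax hv hv₃ hB₁ hB₂ hv₁ hv₂ h₁₂

/-- in a graph maximizing SLEE among connected graphs on `n` vertices with `r`
cut vertices (`1 ≤ r ≤ n − 3`), every cut vertex lies in exactly two blocks. -/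
theorem cut_vertex_in_two_blocks_of_max_SLEE [Fintype V] {n r : ℕ}
    (hn : Fintype.card V = n) (hr1 : 1 ≤ r) (hr2 : r ≤ n - 3)
    (G : SimpleGraph V) (hconn : G.Connected) (hG : cutVertexCount G = r)
    (hmax : ∀ H : SimpleGraph V, H.Connected → cutVertexCount H = r → SLEE H ≤ SLEE G) :
    ∀ v : V, IsCutVertex G v →
      Nat.card {B : Set V // IsBlock G B ∧ v ∈ B} = 2 :=
  cut_vertex_in_two_blocks_of_max_SLEE_general G hconn hG hmax
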